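/- arXiv:1709.04633 — 3 statements merged into one kernel-verified Lean document; each statement's English description precedes it below -/
import Mathlib

section
/- Let Γ be a group containing a normal subgroup N isomorphic (as a group) to ℤ^n, such that N has finite index in Γ and the quotient group G = Γ/N acts on N by conjugation (this action is well defined since N is abelian). Then the first Betti number of Γ, i.e. the rank of the finitely generated abelian group Γ/[Γ,Γ], equals the rank of the subgroup of G-invariants N^G = {z ∈ N : g·z = z for all g ∈ G}, where g·z = ḡ z ḡ⁻¹ for any lift ḡ ∈ Γ of g. -/
/-!
Let `m = [Γ : N]`. Since `N` is abelian, the norm `n ↦ ∏_{q ∈ Γ/N} q n q⁻¹` (any coset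
representatives) is a homomorphism `N → N ∩ Z(Γ)`, and `N ∩ Z(Γ)` is the invariant subgroup `N^G`.
The transfer `Γ → N^G` along the norm is `z ↦ z^(m²)` on the central subgroup `N^G`, while in
`Γ^ab` the norm of `γ^m` equals `γ^(m²)`. Hence the map `(N^G)^ab → Γ^ab` has torsion kernel
and cokernel, so it becomes an isomorphism after `ℚ ⊗ -`.
-/

open scoped TensorProduct

/-- The rank (first Betti number source) of a group: the dimension over `ℚ` of
`(Γ/[Γ,Γ]) ⊗_ℤ ℚ`, i.e. the rank of the finitely generated abelian group `Γ/[Γ,Γ]`. -/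
noncomputable def firstBettiNumber (Γ : Type*) [Group Γ] : ℕ :=
  Module.finrank ℚ (ℚ ⊗[ℤ] Additive (Abelianization Γ))

open scoped IsMulCommutative

namespace AddMonoidHom

variable {A B : Type*} [AddCommGroup A] [AddCommGroup B]

theorem baseChange_rat_injective_of_comp_eq_nsmul (f : A →+ B) (g : B →+ A) {k : ℕ}
    (hk : k ≠ 0) (hgf : ∀ a, g (f a) = k • a) :
    Function.Injective (f.toIntLinearMap.baseChange ℚ) := by
  have hcomp : g.toIntLinearMap ∘ₗ f.toIntLinearMap = (k : ℤ) • LinearMap.id := by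
    ext a; simp [hgf]
  intro x y hxy
  have := congrArg (g.toIntLinearMap.baseChange ℚ) hxy
  rw [← LinearMap.comp_apply, ← LinearMap.comp_apply, ← LinearMap.baseChange_comp, hcomp,
    LinearMap.baseChange_smul, LinearMap.baseChange_id] at this
  simp only [LinearMap.smul_apply, LinearMap.id_apply, ← Int.cast_smul_eq_zsmul ℚ] at this
  exact smul_right_injective _ (by exact_mod_cast hk) this

theorem baseChange_rat_surjective_of_nsmul_mem_range (f : A →+ B)
    (hf : ∀ b, ∃ k : ℕ, k ≠ 0 ∧ k • b ∈ f.range) :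
    Function.Surjective (f.toIntLinearMap.baseChange ℚ) := by
  rw [← LinearMap.range_eq_top, eq_top_iff]
  rintro y -
  induction y using TensorProduct.induction_on with
  | zero => exact zero_mem _
  | add x y hx hy => exact add_mem hx hy
  | tmul q b =>
    obtain ⟨k, hk, a, ha⟩ := hf b
    refine ⟨((k : ℚ)⁻¹ * q) ⊗ₜ a, ?_⟩
    rw [LinearMap.baseChange_tmul, AddMonoidHom.coe_toIntLinearMap, ha, TensorProduct.tmul_smul,
      ← Nat.cast_smul_eq_nsmul ℚ, TensorProduct.smul_tmul', smul_eq_mul, ← mul_assoc,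
      mul_inv_cancel₀ (by exact_mod_cast hk), one_mul]

end AddMonoidHom

theorem Abelianization.of_surjective {G : Type*} [Group G] :
    Function.Surjective (Abelianization.of (G := G)) :=
  QuotientGroup.mk_surjective

theorem firstBettiNumber_subgroup_eq_of_virtualRetraction {Γ : Type*} [Group Γ]
    (H : Subgroup Γ) (τ : Γ →* Abelianization H) {k : ℕ} (hk : k ≠ 0)
    (hτ : ∀ h : H, τ h = .of h ^ k)
    (hpow : ∀ γ : Γ, ∃ l : ℕ, l ≠ 0 ∧ ∃ h : H, Abelianization.of (h : Γ) = .of γ ^ l) :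
    firstBettiNumber H = firstBettiNumber Γ := by
  let f := (Abelianization.map H.subtype).toAdditive
  have hinj := f.baseChange_rat_injective_of_comp_eq_nsmul (Abelianization.lift τ).toAdditive hk
    fun a => by
      obtain ⟨h, hh⟩ := Abelianization.of_surjective a.toMul
      rw [← ofMul_toMul a, ← hh]
      simp [f, Abelianization.map_of, hτ]
  have hsurj := f.baseChange_rat_surjective_of_nsmul_mem_range fun b => by
    obtain ⟨γ, hγ⟩ := Abelianization.of_surjective b.toMul
    obtain ⟨l, hl, h, hh⟩ := hpow γ
    exact ⟨l, hl, .ofMul (.of h), by simp [f, Abelianization.map_of, hh, hγ]⟩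
  exact (LinearEquiv.ofBijective _ ⟨hinj, hsurj⟩).finrank_eq

namespace Subgroup

variable {Γ : Type*} [Group Γ] (N : Subgroup Γ) [N.Normal] [IsMulCommutative N]

theorem conjNormal_eq_of_mk_eq {t u : Γ} (h : (t : Γ ⧸ N) = u) (n : N) :
    MulAut.conjNormal t n = MulAut.conjNormal u n := by
  obtain ⟨k, hk, rfl⟩ : ∃ k ∈ N, u = t * k := ⟨t⁻¹ * u, QuotientGroup.eq.mp h, by group⟩
  rw [map_mul, MulAut.mul_apply]
  congr 1
  ext
  rw [MulAut.conjNormal_apply]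
  exact (congrArg Subtype.val (mul_inv_cancel_comm (⟨k, hk⟩ : N) n)).symm

variable [Fintype (Γ ⧸ N)]

noncomputable def normHom : N →* N :=
  ∏ q : Γ ⧸ N, (MulAut.conjNormal q.out).toMonoidHom

theorem normHom_apply (n : N) : N.normHom n = ∏ q : Γ ⧸ N, MulAut.conjNormal q.out n := by
  simp [normHom]

theorem conjNormal_normHom (γ : Γ) (n : N) :
    MulAut.conjNormal γ (N.normHom n) = N.normHom n := by
  simp only [normHom_apply, map_prod]
  refine Fintype.prod_equiv (MulAction.toPerm γ) _ _ fun q => ?_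
  rw [← MulAut.mul_apply, ← map_mul]
  refine N.conjNormal_eq_of_mk_eq ?_ n
  rw [QuotientGroup.out_eq', MulAction.toPerm_apply, ← MulAction.Quotient.mk_smul_out, smul_eq_mul]

theorem normHom_mem_center (n : N) : (N.normHom n : Γ) ∈ center Γ := by
  refine mem_center_iff.mpr fun γ => ?_
  have := congrArg Subtype.val (N.conjNormal_normHom γ n)
  rwa [MulAut.conjNormal_apply, mul_inv_eq_iff_eq_mul] at this

theorem normHom_eq_pow_of_mem_center {n : N} (hn : (n : Γ) ∈ center Γ) :
    N.normHom n = n ^ Fintype.card (Γ ⧸ N) := by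
  rw [normHom_apply, ← Finset.card_univ, ← Finset.prod_const]
  refine Finset.prod_congr rfl fun q _ => Subtype.ext ?_
  rw [MulAut.conjNormal_apply, mem_center_iff.mp hn, mul_inv_cancel_right]

theorem abelianization_of_normHom (n : N) :
    Abelianization.of (N.normHom n : Γ) = .of (n : Γ) ^ Fintype.card (Γ ⧸ N) := by
  rw [← Finset.card_univ, ← Finset.prod_const]
  change (Abelianization.of.comp N.subtype) (N.normHom n) = _
  rw [normHom_apply, map_prod]
  refine Finset.prod_congr rfl fun q _ => ?_
  simp [MulAut.conjNormal_apply]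

noncomputable def normToCenter : N →* ↥(N ⊓ center Γ) :=
  (N.subtype.comp N.normHom).codRestrict _ fun n => ⟨(N.normHom n).2, N.normHom_mem_center n⟩

theorem coe_normToCenter (n : N) : (N.normToCenter n : Γ) = N.normHom n := rfl

theorem firstBettiNumber_inf_center_eq :
    firstBettiNumber ↥(N ⊓ center Γ) = firstBettiNumber Γ := by
  set m := Fintype.card (Γ ⧸ N)
  have hm : m * m ≠ 0 := mul_ne_zero Fintype.card_ne_zero Fintype.card_ne_zero
  have hindex : N.index = m := by rw [index_eq_card, Nat.card_eq_fintype_card]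
  have := N.finiteIndex_of_finite_quotient
  refine firstBettiNumber_subgroup_eq_of_virtualRetraction _
    (Abelianization.of.comp N.normToCenter).transfer hm (fun z => ?_)
    fun γ => ⟨m * m, hm, N.normToCenter ⟨γ ^ m, hindex ▸ N.pow_index_mem γ⟩, ?_⟩
  · have hz : (z : Γ) ∈ center Γ := z.2.2
    rw [MonoidHom.transfer_eq_pow _ _ fun k g₀ _ => by
      rw [mul_assoc, ← mem_center_iff.mp (pow_mem hz k) g₀, inv_mul_cancel_left]]
    simp only [MonoidHom.comp_apply, ← map_pow]
    congr 1
    ext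
    rw [coe_normToCenter, N.normHom_eq_pow_of_mem_center (by simpa [hindex] using pow_mem hz m),
      SubgroupClass.coe_pow, coe_mk, SubgroupClass.coe_pow, hindex, pow_mul]
  · rw [coe_normToCenter, abelianization_of_normHom, coe_mk, map_pow, ← pow_mul]

end Subgroup

/-- If `N ≅ ℤⁿ` is a normal subgroup of finite index in `Γ`, then the first Betti
number of `Γ` equals the rank of the subgroup of invariants `N^G` of the conjugation
action of `G = Γ/N` on `N`.  Since `N` is abelian, an element `z ∈ N` is `G`-invariant
iff `γ * z * γ⁻¹ = z` for every `γ ∈ Γ`, so `N^G` is described by the subgroup `NG`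
below (which is abelian, hence its rank is the rank of its abelianization). -/
theorem firstBetti_eq_rank_invariants (n : ℕ) (Γ : Type*) [Group Γ]
    (N : Subgroup Γ) [N.Normal] (hfin : N.FiniteIndex)
    (hiso : Nonempty (N ≃* Multiplicative (Fin n → ℤ)))
    (NG : Subgroup Γ)
    (hNG : ∀ z : Γ, z ∈ NG ↔ z ∈ N ∧ ∀ γ : Γ, γ * z * γ⁻¹ = z) :
    firstBettiNumber Γ = firstBettiNumber NG := by
  obtain ⟨e⟩ := hiso
  have : IsMulCommutative N := isMulCommutative_iff.mpr fun a b =>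
    e.injective (by rw [map_mul, map_mul, mul_comm])
  let := N.fintypeQuotientOfFiniteIndex
  obtain rfl : NG = N ⊓ Subgroup.center Γ := by
    ext z
    simp only [hNG, Subgroup.mem_inf, Subgroup.mem_center_iff, mul_inv_eq_iff_eq_mul]
  exact N.firstBettiNumber_inf_center_eq.symm
end

section
/- Let N be a nilpotent group. Then the set √[N,N] = {n ∈ N : n^k ∈ [N,N] for some integer k ≥ 1} is a subgroup of N; moreover, if N is a normal subgroup of a group E, then √[N,N] is a normal subgroup of E. -/
/-! `√[G,G]` is the preimage of the torsion subgroup of the abelian group `G ⧸ [G,G]`, hence a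
subgroup. Every homomorphism maps it into the isolator of its target, so it is characteristic,
and a characteristic subgroup of a normal subgroup `N ◁ E` is normal in `E`. -/

def commutatorIsolator (G : Type*) [Group G] : Subgroup G :=
  (CommGroup.torsion (Abelianization G)).comap Abelianization.of

section

variable {G H : Type*} [Group G] [Group H]

theorem mem_commutatorIsolator_iff {x : G} :
    x ∈ commutatorIsolator G ↔ ∃ k : ℕ, 1 ≤ k ∧ x ^ k ∈ commutator G := by
  simp only [commutatorIsolator, Subgroup.mem_comap, CommGroup.mem_torsion,
    isOfFinOrder_iff_pow_eq_one, ← Order.one_le_iff_pos, ← map_pow, ← MonoidHom.mem_ker,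
    Abelianization.ker_of]

theorem commutatorIsolator_le_comap (f : G →* H) :
    commutatorIsolator G ≤ (commutatorIsolator H).comap f := fun x hx => by
  simpa only [Subgroup.mem_comap, commutatorIsolator, CommGroup.mem_torsion,
    ← Abelianization.map_of] using
    (Abelianization.map f).isOfFinOrder (x := Abelianization.of x) hx

instance commutatorIsolator_characteristic : (commutatorIsolator G).Characteristic :=
  Subgroup.characteristic_iff_le_comap.mpr fun φ => commutatorIsolator_le_comap φ.toMonoidHom

end

theorem mem_map_subtype_commutatorIsolator_iff {E : Type*} [Group E] {N : Subgroup E} {x : E} :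
    x ∈ (commutatorIsolator N).map N.subtype ↔
      x ∈ N ∧ ∃ k : ℕ, 1 ≤ k ∧ x ^ k ∈ (commutator N).map N.subtype := by
  constructor
  · rintro ⟨y, hy, rfl⟩
    obtain ⟨k, hk, hyk⟩ := mem_commutatorIsolator_iff.mp hy
    exact ⟨y.2, k, hk, by simpa only [map_pow] using Subgroup.mem_map_of_mem N.subtype hyk⟩
  · rintro ⟨hx, k, hk, hxk⟩
    refine ⟨⟨x, hx⟩, mem_commutatorIsolator_iff.mpr ⟨k, hk, ?_⟩, rfl⟩
    rwa [← Subgroup.mem_map_iff_mem N.subtype_injective, map_pow]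

theorem isolator_is_subgroup_and_normal_general (E : Type*) [Group E]
    (N : Subgroup E) [N.Normal] :
    (∃ H : Subgroup N, ∀ x : N, x ∈ H ↔ ∃ k : ℕ, 1 ≤ k ∧ x ^ k ∈ commutator N) ∧
    (∃ K : Subgroup E, K.Normal ∧
      ∀ x : E, x ∈ K ↔ x ∈ N ∧ ∃ k : ℕ, 1 ≤ k ∧
        x ^ k ∈ (commutator N).map N.subtype) :=
  ⟨⟨commutatorIsolator N, fun _ => mem_commutatorIsolator_iff⟩,
    ⟨(commutatorIsolator N).map N.subtype, inferInstance,
      fun _ => mem_map_subtype_commutatorIsolator_iff⟩⟩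

/-- For a nilpotent normal subgroup `N` of a group `E`, the isolator
`√[N,N] = {n ∈ N : nᵏ ∈ [N,N] for some k ≥ 1}` is a subgroup of `N`, and it is
the underlying set of a normal subgroup of `E`. -/
theorem isolator_is_subgroup_and_normal (E : Type*) [Group E]
    (N : Subgroup E) [N.Normal] (hnil : Group.IsNilpotent N) :
    (∃ H : Subgroup N, ∀ x : N, x ∈ H ↔ ∃ k : ℕ, 1 ≤ k ∧ x ^ k ∈ commutator N) ∧
    (∃ K : Subgroup E, K.Normal ∧
      ∀ x : E, x ∈ K ↔ x ∈ N ∧ ∃ k : ℕ, 1 ≤ k ∧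
        x ^ k ∈ (commutator N).map N.subtype) :=
  isolator_is_subgroup_and_normal_general E N
end

section
/- Let E be a finitely generated group with a normal nilpotent subgroup N of finite index, and suppose the set K = √[N,N] = {n ∈ N : n^k ∈ [N,N] for some integer k ≥ 1} is a normal subgroup of E. Let Q = E/K. Then the first Betti number of E equals the first Betti number of Q, i.e. the abelianizations E/[E,E] and Q/[Q,Q] have the same rank. -/
/-!
The map `E^ab → (E/K)^ab` induced by the quotient map is surjective, and its kernel is the image
of `K`. Every element of `K` has a power in `[N,N] ≤ [E,E]`, so this kernel is torsion, and
quotienting an abelian group by a torsion subgroup does not change its rank.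
-/

open scoped TensorProduct

namespace Abelianization

variable {G H : Type*} [Group G] [Group H]

theorem of_surjective_s2 : Function.Surjective (of : G → Abelianization G) :=
  QuotientGroup.mk_surjective

theorem map_surjective {f : G →* H} (hf : Function.Surjective f) :
    Function.Surjective (map f) := by
  intro y
  obtain ⟨h, rfl⟩ := of_surjective_s2 y
  obtain ⟨g, rfl⟩ := hf h
  exact ⟨of g, map_of f g⟩

theorem isOfFinOrder_of_pow_mem_commutator {g : G} {n : ℕ} (hn : 0 < n)
    (hg : g ^ n ∈ commutator G) : IsOfFinOrder (of g) := by
  refine isOfFinOrder_iff_pow_eq_one.mpr ⟨n, hn, ?_⟩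
  rwa [← map_pow, ← MonoidHom.mem_ker, ker_of]

theorem isOfFinOrder_of_map_mk'_eq_one {K : Subgroup G} [K.Normal]
    (hK : ∀ k ∈ K, IsOfFinOrder (of k)) {a : Abelianization G}
    (ha : map (QuotientGroup.mk' K) a = 1) : IsOfFinOrder a := by
  obtain ⟨g, rfl⟩ := of_surjective_s2 a
  rw [map_of, ← MonoidHom.mem_ker, ker_of, commutator_def,
    ← Subgroup.map_top_of_surjective _ (QuotientGroup.mk'_surjective K),
    ← Subgroup.map_commutator, ← commutator_def] at ha
  obtain ⟨c, hc, hcg⟩ := ha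
  have hk : c⁻¹ * g ∈ K := by
    rw [← QuotientGroup.ker_mk' K, MonoidHom.mem_ker, map_mul, map_inv, hcg, inv_mul_cancel]
  have hc_one : of c = 1 := by rwa [← MonoidHom.mem_ker, ker_of]
  simpa [hc_one] using hK _ hk

end Abelianization

theorem finrank_eq_of_surjective_of_ker_le_torsion {R M M' : Type*} [CommRing R]
    [AddCommGroup M] [Module R M] [AddCommGroup M'] [Module R M'] {f : M →ₗ[R] M'}
    (hf : Function.Surjective f) (hker : LinearMap.ker f ≤ Submodule.torsion R M) :
    Module.finrank R M' = Module.finrank R M :=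
  (f.quotKerEquivOfSurjective hf).finrank_eq.symm.trans (finrank_quotient_eq_of_le_torsion hker)

theorem firstBettiNumber_eq_finrank_int (G : Type*) [Group G] :
    firstBettiNumber G = Module.finrank ℤ (Additive (Abelianization G)) :=
  (TensorProduct.isBaseChange ℤ _ ℚ).finrank_eq

theorem firstBettiNumber_quotient_eq {G : Type*} [Group G] (K : Subgroup G) [K.Normal]
    (hK : ∀ k ∈ K, IsOfFinOrder (Abelianization.of k)) :
    firstBettiNumber (G ⧸ K) = firstBettiNumber G := by
  rw [firstBettiNumber_eq_finrank_int, firstBettiNumber_eq_finrank_int]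
  refine finrank_eq_of_surjective_of_ker_le_torsion
    (f := (Abelianization.map (QuotientGroup.mk' K)).toAdditive.toIntLinearMap)
    (Abelianization.map_surjective (QuotientGroup.mk'_surjective K)) fun a ha => ?_
  rw [← Submodule.mem_toAddSubgroup, Submodule.torsion_int]
  exact isOfFinAddOrder_ofMul_iff.mpr (Abelianization.isOfFinOrder_of_map_mk'_eq_one hK ha)

theorem firstBetti_eq_firstBetti_of_quotient_by_isolator_general
    (E : Type*) [Group E]
    (N : Subgroup E)
    (K : Subgroup E) [K.Normal]
    (hK : ∀ x : E, x ∈ K ↔ x ∈ N ∧ ∃ k : ℕ, 1 ≤ k ∧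
      x ^ k ∈ (commutator N).map N.subtype) :
    firstBettiNumber E = firstBettiNumber (E ⧸ K) := by
  refine (firstBettiNumber_quotient_eq K fun x hx => ?_).symm
  obtain ⟨-, k, hk, hxk⟩ := (hK x).mp hx
  rw [Subgroup.map_subtype_commutator] at hxk
  exact Abelianization.isOfFinOrder_of_pow_mem_commutator hk
    (Subgroup.commutator_mono le_top le_top hxk)

/-- Let `E` be a finitely generated group with a normal nilpotent subgroup `N` of
finite index, and suppose `K = √[N,N] = {n ∈ N : nᵏ ∈ [N,N] for some k ≥ 1}` is a
normal subgroup of `E`.  Then `E` and `Q = E/K` have the same first Betti number. -/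
theorem firstBetti_eq_firstBetti_of_quotient_by_isolator
    (E : Type*) [Group E] [Group.FG E]
    (N : Subgroup E) [N.Normal] (hnil : Group.IsNilpotent N) (hfin : N.FiniteIndex)
    (K : Subgroup E) [K.Normal]
    (hK : ∀ x : E, x ∈ K ↔ x ∈ N ∧ ∃ k : ℕ, 1 ≤ k ∧
      x ^ k ∈ (commutator N).map N.subtype) :
    firstBettiNumber E = firstBettiNumber (E ⧸ K) :=
  firstBetti_eq_firstBetti_of_quotient_by_isolator_general E N K hK
end
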